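/- If the spectral radius of A_δ satisfies ρ(A_δ) < 1, then the LSTM system is incrementally input-to-state stable (δISS) in X and U: there exist a class-KL function β and a class-K∞ function γ such that for every k ≥ 0, every pair of initial states x_{a,0}, x_{b,0} ∈ X and every pair of input sequences u_{a,0},…,u_{a,k−1} and u_{b,0},…,u_{b,k−1} with all u_{a,h}, u_{b,h} ∈ U, the resulting LSTM trajectories satisfy ‖x_{a,k} − x_{b,k}‖ ≤ β(‖x_{a,0} − x_{b,0}‖, k) + γ(max_{0≤h<k} ‖u_{a,h} − u_{b,h}‖). -/

import Mathlib

open Matrix Filter Set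
open scoped ENNReal NNReal BigOperators

noncomputable section

namespace LSTMmpc

/-- The logistic sigmoid `σ(z) = 1/(1+e^{-z})`. -/
def sigmoid (z : ℝ) : ℝ := 1 / (1 + Real.exp (-z))

/-- Euclidean norm of a finite real vector. -/
def enorm {k : ℕ} (v : Fin k → ℝ) : ℝ := Real.sqrt (∑ i, v i ^ 2)

/-- Sup (∞) norm of a finite real vector. -/
def vinf {k : ℕ} (v : Fin k → ℝ) : ℝ := ⨆ i, |v i|

/-- Spectral (ℓ²-induced) norm of a real matrix. -/
def spec {a b : ℕ} (M : Matrix (Fin a) (Fin b) ℝ) : ℝ :=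
  ⨆ v : {v : Fin b → ℝ // enorm v ≤ 1}, enorm (M.mulVec v.1)

/-- Induced ∞-norm (maximum absolute row sum) of the horizontal block `[s•A, B, v]`. -/
def rowNorm3 {n m : ℕ} (s : ℝ) (A : Matrix (Fin n) (Fin m) ℝ)
    (B : Matrix (Fin n) (Fin n) ℝ) (v : Fin n → ℝ) : ℝ :=
  ⨆ i, (∑ j, |s * A i j| + ∑ j, |B i j| + |v i|)

/-- Induced ∞-norm of the horizontal block `[s•A, B, v, C, t•D]`. -/
def rowNorm5 {n m p : ℕ} (s : ℝ) (A : Matrix (Fin n) (Fin m) ℝ)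
    (B : Matrix (Fin n) (Fin n) ℝ) (v : Fin n → ℝ)
    (C : Matrix (Fin n) (Fin n) ℝ) (t : ℝ) (D : Matrix (Fin n) (Fin p) ℝ) : ℝ :=
  ⨆ i, (∑ j, |s * A i j| + ∑ j, |B i j| + |v i| + ∑ j, |C i j| + ∑ j, |t * D i j|)

/-- Weighted norm `‖v‖_P = √(vᵀ P v)`. -/
def wnorm {k : ℕ} (P : Matrix (Fin k) (Fin k) ℝ) (v : Fin k → ℝ) : ℝ :=
  Real.sqrt (v ⬝ᵥ P.mulVec v)

/-- Minimum eigenvalue of a hermitian real matrix. -/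
def lamMin {k : ℕ} (P : Matrix (Fin k) (Fin k) ℝ) (hP : P.IsHermitian) : ℝ :=
  ⨅ i, hP.eigenvalues i

/-- Maximum eigenvalue of a hermitian real matrix. -/
def lamMax {k : ℕ} (P : Matrix (Fin k) (Fin k) ℝ) (hP : P.IsHermitian) : ℝ :=
  ⨆ i, hP.eigenvalues i

/-- Spectral radius (over `ℂ`) of a real square matrix. -/
def specRad {k : ℕ} (M : Matrix (Fin k) (Fin k) ℝ) : ℝ≥0∞ :=
  spectralRadius ℂ (M.map (fun x : ℝ => (x : ℂ)))

/-- Class `K∞` functions `[0,∞) → [0,∞)`. -/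
def IsClassKInf (γ : ℝ → ℝ) : Prop :=
  ContinuousOn γ (Set.Ici 0) ∧ γ 0 = 0 ∧ StrictMonoOn γ (Set.Ici 0) ∧
    (∀ s, 0 ≤ s → 0 ≤ γ s) ∧ Tendsto γ atTop atTop

/-- Class `KL` functions. -/
def IsClassKL (β : ℝ → ℕ → ℝ) : Prop :=
  (∀ k, ContinuousOn (fun s => β s k) (Set.Ici 0) ∧
      StrictMonoOn (fun s => β s k) (Set.Ici 0) ∧ β 0 k = 0) ∧
  (∀ s, 0 < s → StrictAnti (fun k => β s k) ∧ Tendsto (fun k => β s k) atTop (nhds 0)) ∧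
  (∀ s, 0 ≤ s → ∀ k, 0 ≤ β s k)

/-- Weights of an LSTM network. -/
structure LSTM (n m p : ℕ) where
  Wf : Matrix (Fin n) (Fin m) ℝ
  Wi : Matrix (Fin n) (Fin m) ℝ
  Wc : Matrix (Fin n) (Fin m) ℝ
  Wo : Matrix (Fin n) (Fin m) ℝ
  Uf : Matrix (Fin n) (Fin n) ℝ
  Ui : Matrix (Fin n) (Fin n) ℝ
  Uc : Matrix (Fin n) (Fin n) ℝ
  Uo : Matrix (Fin n) (Fin n) ℝ
  bf : Fin n → ℝ
  bi : Fin n → ℝ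
  bc : Fin n → ℝ
  bo : Fin n → ℝ
  Wy : Matrix (Fin p) (Fin n) ℝ
  bY : Fin p → ℝ

/-- LSTM state `(c, h)`. -/
abbrev State (n : ℕ) := (Fin n → ℝ) × (Fin n → ℝ)

/-- Augmented state `(c, h, d)`. -/
abbrev AugState (n p : ℕ) := (Fin n → ℝ) × (Fin n → ℝ) × (Fin p → ℝ)

variable {n m p : ℕ}

def stepC (S : LSTM n m p) (u : Fin m → ℝ) (c h : Fin n → ℝ) : Fin n → ℝ := fun j =>
  sigmoid ((S.Wf.mulVec u + S.Uf.mulVec h + S.bf) j) * c j +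
    sigmoid ((S.Wi.mulVec u + S.Ui.mulVec h + S.bi) j) *
      Real.tanh ((S.Wc.mulVec u + S.Uc.mulVec h + S.bc) j)

def stepH (S : LSTM n m p) (u : Fin m → ℝ) (c h : Fin n → ℝ) : Fin n → ℝ := fun j =>
  sigmoid ((S.Wo.mulVec u + S.Uo.mulVec h + S.bo) j) * Real.tanh (stepC S u c h j)

/-- One step of the LSTM dynamics `x⁺ = f(x, u)`. -/
def step (S : LSTM n m p) (x : State n) (u : Fin m → ℝ) : State n :=
  (stepC S u x.1 x.2, stepH S u x.1 x.2)

/-- Output map `g(x) = W_y h + b_y`. -/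
def out (S : LSTM n m p) (x : State n) : Fin p → ℝ := S.Wy.mulVec x.2 + S.bY

/-- LSTM trajectory. -/
def traj (S : LSTM n m p) (x0 : State n) (u : ℕ → Fin m → ℝ) : ℕ → State n
  | 0 => x0
  | k + 1 => step S (traj S x0 u k) (u k)

def sFb (S : LSTM n m p) (umax : ℝ) : ℝ := sigmoid (rowNorm3 umax S.Wf S.Uf S.bf)
def sIb (S : LSTM n m p) (umax : ℝ) : ℝ := sigmoid (rowNorm3 umax S.Wi S.Ui S.bi)
def sOb (S : LSTM n m p) (umax : ℝ) : ℝ := sigmoid (rowNorm3 umax S.Wo S.Uo S.bo)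
def sCb (S : LSTM n m p) (umax : ℝ) : ℝ := Real.tanh (rowNorm3 umax S.Wc S.Uc S.bc)
def sXb (S : LSTM n m p) (umax : ℝ) : ℝ :=
  Real.tanh (sIb S umax * sCb S umax / (1 - sFb S umax))
def alphaD (S : LSTM n m p) (umax : ℝ) : ℝ :=
  (1/4) * spec S.Uf * (sIb S umax * sCb S umax / (1 - sFb S umax)) +
    sIb S umax * spec S.Uc + (1/4) * spec S.Ui * sCb S umax
def betaD (S : LSTM n m p) (umax : ℝ) : ℝ :=
  (1/4) * spec S.Wf * (sIb S umax * sCb S umax / (1 - sFb S umax)) +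
    sIb S umax * spec S.Wc + (1/4) * spec S.Wi * sCb S umax
def Adelta (S : LSTM n m p) (umax : ℝ) : Matrix (Fin 2) (Fin 2) ℝ :=
  !![sFb S umax, alphaD S umax;
     sOb S umax * sFb S umax, alphaD S umax * sOb S umax + (1/4) * sXb S umax * spec S.Uo]
def Bdelta (S : LSTM n m p) (umax : ℝ) : Fin 2 → ℝ :=
  ![betaD S umax, betaD S umax * sOb S umax + (1/4) * sXb S umax * spec S.Wo]

def setU (m : ℕ) (umax : ℝ) : Set (Fin m → ℝ) := {u | vinf u ≤ umax}
def setH (n : ℕ) : Set (Fin n → ℝ) := {h | vinf h ≤ 1}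
def setC (S : LSTM n m p) (umax : ℝ) : Set (Fin n → ℝ) :=
  {c | vinf c ≤ sIb S umax * sCb S umax / (1 - sFb S umax)}
def setX (S : LSTM n m p) (umax : ℝ) : Set (State n) := (setC S umax) ×ˢ (setH n)
def setD (p : ℕ) (dmax : ℝ) : Set (Fin p → ℝ) := {d | vinf d ≤ dmax}

/-- Euclidean norm of the full state. -/
def xnorm {n : ℕ} (x : State n) : ℝ := Real.sqrt (∑ i, x.1 i ^ 2 + ∑ i, x.2 i ^ 2)

/-- Euclidean norm of the augmented state. -/
def chinorm {n p : ℕ} (χ : AugState n p) : ℝ :=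
  Real.sqrt (∑ i, χ.1 i ^ 2 + ∑ i, χ.2.1 i ^ 2 + ∑ i, χ.2.2 i ^ 2)

/-- Incremental input-to-state stability of the LSTM in `X` and `U`. -/
def deltaISS (S : LSTM n m p) (umax : ℝ) : Prop :=
  ∃ β γ, IsClassKL β ∧ IsClassKInf γ ∧
    ∀ (k : ℕ) (xa0 xb0 : State n), xa0 ∈ setX S umax → xb0 ∈ setX S umax →
      ∀ ua ub : ℕ → Fin m → ℝ,
        (∀ h < k, ua h ∈ setU m umax) → (∀ h < k, ub h ∈ setU m umax) →
        xnorm (traj S xa0 ua k - traj S xb0 ub k) ≤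
          β (xnorm (xa0 - xb0)) k + γ (⨆ h ∈ Finset.range k, enorm (ua h - ub h))

/-- Observer gains. -/
structure Gains (n p : ℕ) where
  Lf : Matrix (Fin n) (Fin p) ℝ
  Li : Matrix (Fin n) (Fin p) ℝ
  Lo : Matrix (Fin n) (Fin p) ℝ
  Ld : Matrix (Fin p) (Fin p) ℝ

/-- Componentwise saturation to `[-dmax, dmax]`. -/
def sat {p : ℕ} (dmax : ℝ) (v : Fin p → ℝ) : Fin p → ℝ := fun j =>
  min (max (v j) (-dmax)) dmax

/-- Observer output `ŷ = W_y ĥ + b_y + d̂`. -/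
def yhat (S : LSTM n m p) (hh : Fin n → ℝ) (dh : Fin p → ℝ) : Fin p → ℝ :=
  S.Wy.mulVec hh + S.bY + dh

def obsC (S : LSTM n m p) (G : Gains n p) (u : Fin m → ℝ) (y : Fin p → ℝ)
    (ch hh : Fin n → ℝ) (dh : Fin p → ℝ) : Fin n → ℝ := fun j =>
  sigmoid ((S.Wf.mulVec u + S.Uf.mulVec hh + S.bf + G.Lf.mulVec (y - yhat S hh dh)) j) * ch j +
    sigmoid ((S.Wi.mulVec u + S.Ui.mulVec hh + S.bi + G.Li.mulVec (y - yhat S hh dh)) j) *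
      Real.tanh ((S.Wc.mulVec u + S.Uc.mulVec hh + S.bc) j)

def obsH (S : LSTM n m p) (G : Gains n p) (u : Fin m → ℝ) (y : Fin p → ℝ)
    (ch hh : Fin n → ℝ) (dh : Fin p → ℝ) : Fin n → ℝ := fun j =>
  sigmoid ((S.Wo.mulVec u + S.Uo.mulVec hh + S.bo + G.Lo.mulVec (y - yhat S hh dh)) j) *
    Real.tanh (obsC S G u y ch hh dh j)

def obsD (S : LSTM n m p) (G : Gains n p) (dmax : ℝ) (y : Fin p → ℝ)
    (hh : Fin n → ℝ) (dh : Fin p → ℝ) : Fin p → ℝ :=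
  sat dmax (dh + G.Ld.mulVec (y - yhat S hh dh))

/-- One step of the observer. -/
def obsStep (S : LSTM n m p) (G : Gains n p) (dmax : ℝ) (u : Fin m → ℝ) (y : Fin p → ℝ)
    (χ : AugState n p) : AugState n p :=
  (obsC S G u y χ.1 χ.2.1 χ.2.2, obsH S G u y χ.1 χ.2.1 χ.2.2, obsD S G dmax y χ.2.1 χ.2.2)

/-- Observer trajectory. -/
def obsTraj (S : LSTM n m p) (G : Gains n p) (dmax : ℝ) (u : ℕ → Fin m → ℝ)
    (y : ℕ → Fin p → ℝ) (χ0 : AugState n p) : ℕ → AugState n p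
  | 0 => χ0
  | k + 1 => obsStep S G dmax (u k) (y k) (obsTraj S G dmax u y χ0 k)

def sFh (S : LSTM n m p) (G : Gains n p) (umax dmax : ℝ) : ℝ :=
  sigmoid (rowNorm5 umax S.Wf (S.Uf - G.Lf * S.Wy) S.bf (G.Lf * S.Wy) (2 * dmax) G.Lf)
def sIh (S : LSTM n m p) (G : Gains n p) (umax dmax : ℝ) : ℝ :=
  sigmoid (rowNorm5 umax S.Wi (S.Ui - G.Li * S.Wy) S.bi (G.Li * S.Wy) (2 * dmax) G.Li)
def sOh (S : LSTM n m p) (G : Gains n p) (umax dmax : ℝ) : ℝ :=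
  sigmoid (rowNorm5 umax S.Wo (S.Uo - G.Lo * S.Wy) S.bo (G.Lo * S.Wy) (2 * dmax) G.Lo)
def alphaH (S : LSTM n m p) (G : Gains n p) (umax : ℝ) : ℝ :=
  (1/4) * (sIb S umax * sCb S umax / (1 - sFb S umax)) * spec (S.Uf - G.Lf * S.Wy) +
    sIb S umax * spec S.Uc + (1/4) * sCb S umax * spec (S.Ui - G.Li * S.Wy)
def betaH (S : LSTM n m p) (G : Gains n p) (umax : ℝ) : ℝ :=
  (1/4) * (sIb S umax * sCb S umax / (1 - sFb S umax)) * spec G.Lf +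
    (1/4) * sCb S umax * spec G.Li
def gammaH (S : LSTM n m p) (G : Gains n p) (umax dmax : ℝ) : ℝ :=
  sOh S G umax dmax * alphaH S G umax + (1/4) * sXb S umax * spec (S.Uo - G.Lo * S.Wy)
def Ad (S : LSTM n m p) (G : Gains n p) (umax dmax : ℝ) : Matrix (Fin 3) (Fin 3) ℝ :=
  !![sFh S G umax dmax, alphaH S G umax, betaH S G umax;
     sOh S G umax dmax * sFh S G umax dmax, gammaH S G umax dmax,
       sOh S G umax dmax * betaH S G umax + (1/4) * sXb S umax * spec G.Lo;
     0, spec (G.Ld * S.Wy), spec ((1 : Matrix (Fin p) (Fin p) ℝ) - G.Ld)]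

def setChat (S : LSTM n m p) (G : Gains n p) (umax dmax : ℝ) : Set (Fin n → ℝ) :=
  {c | vinf c ≤ sIh S G umax dmax * sCb S umax / (1 - sFh S G umax dmax)}
def setIhat (S : LSTM n m p) (G : Gains n p) (umax dmax : ℝ) : Set (AugState n p) :=
  (setChat S G umax dmax) ×ˢ ((setH n) ×ˢ (setD p dmax))

/-- Incremental Lyapunov function for the LSTM. -/
def Vs {n : ℕ} (Ps : Matrix (Fin 2) (Fin 2) ℝ) (xa xb : State n) : ℝ :=
  wnorm Ps ![enorm (xa.1 - xb.1), enorm (xa.2 - xb.2)]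

/-- Lyapunov function for the observer estimation error. -/
def Vo {n p : ℕ} (Po : Matrix (Fin 3) (Fin 3) ℝ) (χh χ : AugState n p) : ℝ :=
  wnorm Po ![enorm (χh.1 - χ.1), enorm (χh.2.1 - χ.2.1), enorm (χh.2.2 - χ.2.2)]

/-- Disturbance-augmented LSTM update applied to the observer state. -/
def faug (S : LSTM n m p) (χ : AugState n p) (u : Fin m → ℝ) : AugState n p :=
  (stepC S u χ.1 χ.2.1, stepH S u χ.1 χ.2.1, χ.2.2)

def alphaBar (S : LSTM n m p) (G : Gains n p) (umax dmax : ℝ) : ℝ :=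
  (1/4) * (sIh S G umax dmax * sCb S umax / (1 - sFh S G umax dmax)) * spec (G.Lf * S.Wy) +
    (1/4) * sCb S umax * spec (G.Li * S.Wy)
def betaBar (S : LSTM n m p) (G : Gains n p) (umax dmax : ℝ) : ℝ :=
  (1/4) * (sIh S G umax dmax * sCb S umax / (1 - sFh S G umax dmax)) * spec G.Lf +
    (1/4) * sCb S umax * spec G.Li
def gammaBar (S : LSTM n m p) (G : Gains n p) (umax dmax : ℝ) : ℝ :=
  (1/4) * Real.tanh (sIh S G umax dmax * sCb S umax / (1 - sFh S G umax dmax))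
def Lmat (S : LSTM n m p) (G : Gains n p) (umax dmax : ℝ) : Matrix (Fin 3) (Fin 3) ℝ :=
  !![0, alphaBar S G umax dmax, betaBar S G umax dmax;
     0, gammaBar S G umax dmax * spec (G.Lo * S.Wy) + sOb S umax * alphaBar S G umax dmax,
       gammaBar S G umax dmax * spec G.Lo + sOb S umax * betaBar S G umax dmax;
     0, spec (G.Ld * S.Wy), spec G.Ld]

/-! Along two trajectories in the invariant set `X`, the increments `Δc = ‖c_a - c_b‖` and
`Δh = ‖h_a - h_b‖` obey the componentwise comparison
`(Δc, Δh)⁺ ≤ A_δ (Δc, Δh) + ‖u_a - u_b‖ B_δ`: σ and tanh are `1/4`- and `1`-Lipschitz, and on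
`X × U` every gate activation is bounded by the corresponding `σ̄`. Since `A_δ ≥ 0` and
`ρ(A_δ) < 1`, there are `μ < 1` and a positive left vector `v` with `vᵀ A_δ ≤ μ vᵀ`, so the weighted
increment `vᵀ (Δc, Δh)` contracts by `μ` per step up to the input term; this gives the δISS
estimate with `β(s, k) = C₁ μᵏ s` and `γ(s) = C₂ s`. -/

lemma sigmoid_eq_real : sigmoid = Real.sigmoid := funext fun _ => one_div _

lemma sigmoid_pos (x : ℝ) : 0 < sigmoid x := sigmoid_eq_real ▸ Real.sigmoid_pos x

lemma sigmoid_lt_one (x : ℝ) : sigmoid x < 1 := sigmoid_eq_real ▸ Real.sigmoid_lt_one x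

lemma sigmoid_monotone : Monotone sigmoid := sigmoid_eq_real ▸ Real.sigmoid_monotone

lemma lipschitzWith_sigmoid : LipschitzWith (1 / 4) sigmoid := by
  rw [sigmoid_eq_real]
  refine lipschitzWith_of_nnnorm_deriv_le differentiable_sigmoid fun x => ?_
  have h0 := Real.sigmoid_nonneg x
  have h1 := Real.sigmoid_le_one x
  rw [← NNReal.coe_le_coe, coe_nnnorm, Real.deriv_sigmoid, Real.norm_eq_abs,
    abs_of_nonneg (by nlinarith)]
  push_cast
  nlinarith [sq_nonneg (2 * Real.sigmoid x - 1)]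

lemma tanh_eq_two_mul_sigmoid_sub_one (x : ℝ) : Real.tanh x = 2 * sigmoid (2 * x) - 1 := by
  rw [Real.tanh_eq, sigmoid, show -(2 * x) = -x + -x by ring, Real.exp_add]
  have := Real.exp_pos x
  have := Real.exp_pos (-x)
  have hx : Real.exp x * Real.exp (-x) = 1 := by rw [← Real.exp_add]; simp
  field_simp
  linear_combination 2 * Real.exp (-x) * hx

lemma tanh_monotone : Monotone Real.tanh := fun x y hxy => by
  simp only [tanh_eq_two_mul_sigmoid_sub_one]
  linarith [sigmoid_monotone (by linarith : 2 * x ≤ 2 * y)]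

lemma lipschitzWith_tanh : LipschitzWith 1 Real.tanh := by
  refine LipschitzWith.of_dist_le_mul fun x y => ?_
  have h := lipschitzWith_sigmoid.dist_le_mul (2 * x) (2 * y)
  simp only [Real.dist_eq, tanh_eq_two_mul_sigmoid_sub_one] at h ⊢
  rw [show 2 * x - 2 * y = 2 * (x - y) by ring, abs_mul] at h
  rw [show 2 * sigmoid (2 * x) - 1 - (2 * sigmoid (2 * y) - 1)
    = 2 * (sigmoid (2 * x) - sigmoid (2 * y)) by ring, abs_mul]
  norm_num at h ⊢
  linarith

lemma abs_tanh_le_tanh {x M : ℝ} (h : |x| ≤ M) : |Real.tanh x| ≤ Real.tanh M := by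
  rw [abs_le, ← Real.tanh_neg]
  exact ⟨tanh_monotone (neg_le_of_abs_le h), tanh_monotone (le_of_abs_le h)⟩

lemma tanh_nonneg {x : ℝ} (hx : 0 ≤ x) : 0 ≤ Real.tanh x :=
  Real.tanh_zero ▸ tanh_monotone hx

section EuclideanNorm

variable {k : ℕ}

lemma enorm_eq_norm (v : Fin k → ℝ) : enorm v = ‖WithLp.toLp 2 v‖ := by
  simp [enorm, EuclideanSpace.norm_eq]

lemma enorm_nonneg (v : Fin k → ℝ) : 0 ≤ enorm v := Real.sqrt_nonneg _

lemma enorm_add_le (v w : Fin k → ℝ) : enorm (v + w) ≤ enorm v + enorm w := by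
  simpa only [enorm_eq_norm, WithLp.toLp_add] using norm_add_le _ _

lemma enorm_le_mul_of_abs_le {v w : Fin k → ℝ} {K : ℝ} (hK : 0 ≤ K)
    (h : ∀ j, |v j| ≤ K * |w j|) : enorm v ≤ K * enorm w := by
  rw [enorm, enorm, ← Real.sqrt_sq hK, ← Real.sqrt_mul (sq_nonneg K), Finset.mul_sum]
  refine Real.sqrt_le_sqrt (Finset.sum_le_sum fun j _ => ?_)
  calc v j ^ 2 = |v j| ^ 2 := (sq_abs _).symm
    _ ≤ (K * |w j|) ^ 2 := pow_le_pow_left₀ (abs_nonneg _) (h j) 2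
    _ = K ^ 2 * w j ^ 2 := by rw [mul_pow, sq_abs]

lemma enorm_mul_le {a v : Fin k → ℝ} {K : ℝ} (hK : 0 ≤ K) (ha : ∀ j, |a j| ≤ K) :
    enorm (a * v) ≤ K * enorm v :=
  enorm_le_mul_of_abs_le hK fun j => by
    rw [Pi.mul_apply, abs_mul]
    exact mul_le_mul_of_nonneg_right (ha j) (abs_nonneg _)

lemma enorm_comp_sub_le {g : ℝ → ℝ} {K : ℝ≥0} (hg : LipschitzWith K g) (v w : Fin k → ℝ) :
    enorm (g ∘ v - g ∘ w) ≤ K * enorm (v - w) :=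
  enorm_le_mul_of_abs_le K.2 fun j => by
    simpa only [Real.dist_eq, Pi.sub_apply, Function.comp_apply] using hg.dist_le_mul (v j) (w j)

lemma enorm_tanh_sub_le (v w : Fin k → ℝ) :
    enorm (Real.tanh ∘ v - Real.tanh ∘ w) ≤ enorm (v - w) := by
  simpa using enorm_comp_sub_le lipschitzWith_tanh v w

open scoped Matrix.Norms.L2Operator in
lemma spec_eq_l2_opNorm {a b : ℕ} (M : Matrix (Fin a) (Fin b) ℝ) : spec M = ‖M‖ := by
  have hle : ∀ v : Fin b → ℝ, enorm (M *ᵥ v) ≤ ‖M‖ * enorm v := fun v => by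
    simpa [enorm_eq_norm] using M.l2_opNorm_mulVec (WithLp.toLp 2 v)
  have : Nonempty {v : Fin b → ℝ // enorm v ≤ 1} := ⟨⟨0, by simp [enorm]⟩⟩
  have hbdd : BddAbove (range fun v : {v : Fin b → ℝ // enorm v ≤ 1} => enorm (M *ᵥ v.1)) :=
    ⟨‖M‖, by
      rintro _ ⟨v, rfl⟩
      exact (hle v).trans (mul_le_of_le_one_right (norm_nonneg _) v.2)⟩
  apply le_antisymm
  · exact ciSup_le fun v => (hle v).trans (mul_le_of_le_one_right (norm_nonneg _) v.2)
  · have h0 : 0 ≤ spec M := (enorm_nonneg _).trans (le_ciSup hbdd ⟨0, by simp [enorm]⟩)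
    refine ContinuousLinearMap.opNorm_le_of_unit_norm h0 fun x hx => ?_
    refine le_of_eq_of_le ?_ (le_ciSup hbdd ⟨x.ofLp, by simp [enorm_eq_norm, hx]⟩)
    simp [enorm_eq_norm, Matrix.toLpLin_apply]

open scoped Matrix.Norms.L2Operator in
lemma spec_nonneg {a b : ℕ} (M : Matrix (Fin a) (Fin b) ℝ) : 0 ≤ spec M :=
  spec_eq_l2_opNorm M ▸ norm_nonneg M

open scoped Matrix.Norms.L2Operator in
lemma enorm_mulVec_le {a : ℕ} (M : Matrix (Fin a) (Fin k) ℝ) (v : Fin k → ℝ) :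
    enorm (M *ᵥ v) ≤ spec M * enorm v := by
  simpa [spec_eq_l2_opNorm, enorm_eq_norm] using M.l2_opNorm_mulVec (WithLp.toLp 2 v)

end EuclideanNorm

section Gates

variable {n m : ℕ}

lemma abs_le_vinf {k : ℕ} (v : Fin k → ℝ) (j : Fin k) : |v j| ≤ vinf v :=
  le_ciSup (f := fun i => |v i|) (Set.finite_range _).bddAbove j

lemma vinf_le {k : ℕ} {v : Fin k → ℝ} {M : ℝ} (hM : 0 ≤ M) (h : ∀ j, |v j| ≤ M) :
    vinf v ≤ M := by
  rcases isEmpty_or_nonempty (Fin k) with hk | hk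
  · rwa [vinf, Real.iSup_of_isEmpty]
  · exact ciSup_le h

lemma rowNorm3_nonneg (s : ℝ) (W : Matrix (Fin n) (Fin m) ℝ) (U : Matrix (Fin n) (Fin n) ℝ)
    (b : Fin n → ℝ) : 0 ≤ rowNorm3 s W U b :=
  Real.iSup_nonneg fun _ => by positivity

def gate (W : Matrix (Fin n) (Fin m) ℝ) (U : Matrix (Fin n) (Fin n) ℝ) (b : Fin n → ℝ)
    (u : Fin m → ℝ) (h : Fin n → ℝ) : Fin n → ℝ :=
  W *ᵥ u + U *ᵥ h + b

variable {W : Matrix (Fin n) (Fin m) ℝ} {U : Matrix (Fin n) (Fin n) ℝ} {b : Fin n → ℝ}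

lemma abs_gate_le {umax : ℝ} {u : Fin m → ℝ} {h : Fin n → ℝ} (hu : vinf u ≤ umax)
    (hh : vinf h ≤ 1) (j : Fin n) : |gate W U b u h j| ≤ rowNorm3 umax W U b := by
  have hWu : |(W *ᵥ u) j| ≤ ∑ l, |umax * W j l| := by
    change |∑ l, W j l * u l| ≤ _
    refine (Finset.abs_sum_le_sum_abs _ _).trans (Finset.sum_le_sum fun l _ => ?_)
    rw [abs_mul, abs_mul, mul_comm |umax|]
    exact mul_le_mul_of_nonneg_left ((abs_le_vinf u l).trans (hu.trans (le_abs_self _)))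
      (abs_nonneg _)
  have hUh : |(U *ᵥ h) j| ≤ ∑ l, |U j l| := by
    change |∑ l, U j l * h l| ≤ _
    refine (Finset.abs_sum_le_sum_abs _ _).trans (Finset.sum_le_sum fun l _ => ?_)
    rw [abs_mul]
    exact mul_le_of_le_one_right (abs_nonneg _) ((abs_le_vinf h l).trans hh)
  refine le_trans ?_ (le_ciSup (f := fun i => ∑ l, |umax * W i l| + ∑ l, |U i l| + |b i|)
    (Set.finite_range _).bddAbove j)
  calc |gate W U b u h j| ≤ |(W *ᵥ u) j| + |(U *ᵥ h) j| + |b j| := abs_add_three _ _ _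
    _ ≤ _ := by gcongr

lemma enorm_gate_sub_le (ua ub : Fin m → ℝ) (ha hb : Fin n → ℝ) :
    enorm (gate W U b ua ha - gate W U b ub hb)
      ≤ spec U * enorm (ha - hb) + spec W * enorm (ua - ub) := by
  have h : gate W U b ua ha - gate W U b ub hb = U *ᵥ (ha - hb) + W *ᵥ (ua - ub) := by
    simp only [gate, Matrix.mulVec_sub]
    abel
  rw [h]
  exact (enorm_add_le _ _).trans (add_le_add (enorm_mulVec_le _ _) (enorm_mulVec_le _ _))

lemma enorm_comp_gate_sub_le {g : ℝ → ℝ} {K : ℝ≥0} (hg : LipschitzWith K g)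
    (ua ub : Fin m → ℝ) (ha hb : Fin n → ℝ) :
    enorm (g ∘ gate W U b ua ha - g ∘ gate W U b ub hb)
      ≤ K * (spec U * enorm (ha - hb) + spec W * enorm (ua - ub)) :=
  (enorm_comp_sub_le hg _ _).trans
    (mul_le_mul_of_nonneg_left (enorm_gate_sub_le ua ub ha hb) K.2)

lemma enorm_sigmoid_gate_sub_le (ua ub : Fin m → ℝ) (ha hb : Fin n → ℝ) :
    enorm (sigmoid ∘ gate W U b ua ha - sigmoid ∘ gate W U b ub hb)
      ≤ 1 / 4 * (spec U * enorm (ha - hb) + spec W * enorm (ua - ub)) := by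
  exact_mod_cast enorm_comp_gate_sub_le lipschitzWith_sigmoid ua ub ha hb

lemma enorm_tanh_gate_sub_le (ua ub : Fin m → ℝ) (ha hb : Fin n → ℝ) :
    enorm (Real.tanh ∘ gate W U b ua ha - Real.tanh ∘ gate W U b ub hb)
      ≤ spec U * enorm (ha - hb) + spec W * enorm (ua - ub) := by
  simpa using enorm_comp_gate_sub_le lipschitzWith_tanh ua ub ha hb

lemma abs_sigmoid_gate_le {umax : ℝ} {u : Fin m → ℝ} {h : Fin n → ℝ} (hu : vinf u ≤ umax)
    (hh : vinf h ≤ 1) (j : Fin n) :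
    |(sigmoid ∘ gate W U b u h) j| ≤ sigmoid (rowNorm3 umax W U b) := by
  rw [Function.comp_apply, abs_of_pos (sigmoid_pos _)]
  exact sigmoid_monotone ((le_abs_self _).trans (abs_gate_le hu hh j))

lemma abs_tanh_gate_le {umax : ℝ} {u : Fin m → ℝ} {h : Fin n → ℝ} (hu : vinf u ≤ umax)
    (hh : vinf h ≤ 1) (j : Fin n) :
    |(Real.tanh ∘ gate W U b u h) j| ≤ Real.tanh (rowNorm3 umax W U b) :=
  abs_tanh_le_tanh (abs_gate_le hu hh j)

end Gates

section Dynamics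

variable {n m p : ℕ} {S : LSTM n m p} {umax : ℝ}

lemma stepC_eq (S : LSTM n m p) (u : Fin m → ℝ) (c h : Fin n → ℝ) :
    stepC S u c h = (sigmoid ∘ gate S.Wf S.Uf S.bf u h) * c
      + (sigmoid ∘ gate S.Wi S.Ui S.bi u h) * (Real.tanh ∘ gate S.Wc S.Uc S.bc u h) :=
  rfl

lemma stepH_eq (S : LSTM n m p) (u : Fin m → ℝ) (c h : Fin n → ℝ) :
    stepH S u c h = (sigmoid ∘ gate S.Wo S.Uo S.bo u h) * (Real.tanh ∘ stepC S u c h) :=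
  rfl

lemma sCb_nonneg (S : LSTM n m p) (umax : ℝ) : 0 ≤ sCb S umax :=
  tanh_nonneg (rowNorm3_nonneg _ _ _ _)

lemma cBar_nonneg (S : LSTM n m p) (umax : ℝ) :
    0 ≤ sIb S umax * sCb S umax / (1 - sFb S umax) :=
  div_nonneg (mul_nonneg (sigmoid_pos _).le (sCb_nonneg S umax))
    (sub_nonneg.2 (sigmoid_lt_one _).le)

-- `C` is invariant because its radius is the fixed point of `c ↦ σ̄f c + σ̄i σ̄c`.
lemma sFb_mul_cBar_add (S : LSTM n m p) (umax : ℝ) :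
    sFb S umax * (sIb S umax * sCb S umax / (1 - sFb S umax)) + sIb S umax * sCb S umax
      = sIb S umax * sCb S umax / (1 - sFb S umax) := by
  have : 1 - sFb S umax ≠ 0 := (sub_pos.2 (sigmoid_lt_one _)).ne'
  field_simp
  ring

variable {x xa xb : State n} {u ua ub : Fin m → ℝ}

lemma stepC_mem_setC (hx : x ∈ setX S umax) (hu : u ∈ setU m umax) :
    stepC S u x.1 x.2 ∈ setC S umax := by
  obtain ⟨hc, hh⟩ := hx
  refine vinf_le (cBar_nonneg S umax) fun j => ?_
  rw [stepC_eq, ← sFb_mul_cBar_add]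
  refine (abs_add_le _ _).trans (add_le_add ?_ ?_) <;> rw [Pi.mul_apply, abs_mul]
  · exact mul_le_mul (abs_sigmoid_gate_le hu hh j) ((abs_le_vinf _ j).trans hc)
      (abs_nonneg _) (sigmoid_pos _).le
  · exact mul_le_mul (abs_sigmoid_gate_le hu hh j) (abs_tanh_gate_le hu hh j)
      (abs_nonneg _) (sigmoid_pos _).le

lemma stepH_mem_setH (x : State n) (u : Fin m → ℝ) : stepH S u x.1 x.2 ∈ setH n := by
  refine vinf_le zero_le_one fun j => ?_
  rw [stepH_eq, Pi.mul_apply, abs_mul]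
  refine mul_le_one₀ ?_ (abs_nonneg _) (Real.abs_tanh_lt_one _).le
  rw [Function.comp_apply, abs_of_pos (sigmoid_pos _)]
  exact (sigmoid_lt_one _).le

lemma step_mem_setX (hx : x ∈ setX S umax) (hu : u ∈ setU m umax) :
    step S x u ∈ setX S umax :=
  ⟨stepC_mem_setC hx hu, stepH_mem_setH x u⟩

lemma traj_mem_setX {x0 : State n} {u : ℕ → Fin m → ℝ} {k : ℕ} (hx0 : x0 ∈ setX S umax)
    (hu : ∀ j < k, u j ∈ setU m umax) : ∀ j ≤ k, traj S x0 u j ∈ setX S umax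
  | 0, _ => hx0
  | j + 1, hj => step_mem_setX (traj_mem_setX hx0 hu j (by omega)) (hu j (by omega))

end Dynamics

section Increments

variable {n m p : ℕ} {S : LSTM n m p} {umax : ℝ} {xa xb : State n} {ua ub : Fin m → ℝ}

lemma enorm_add_four_le {k : ℕ} (a b c d : Fin k → ℝ) :
    enorm (a + b + c + d) ≤ enorm a + enorm b + enorm c + enorm d := by
  linarith [enorm_add_le (a + b + c) d, enorm_add_le (a + b) c, enorm_add_le a b]

lemma enorm_stepC_sub_le (hxa : xa ∈ setX S umax) (hxb : xb ∈ setX S umax)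
    (hua : ua ∈ setU m umax) (hub : ub ∈ setU m umax) :
    enorm (stepC S ua xa.1 xa.2 - stepC S ub xb.1 xb.2)
      ≤ sFb S umax * enorm (xa.1 - xb.1) + alphaD S umax * enorm (xa.2 - xb.2)
        + betaD S umax * enorm (ua - ub) := by
  obtain ⟨-, hha⟩ := hxa
  obtain ⟨hcb, hhb⟩ := hxb
  set cBar := sIb S umax * sCb S umax / (1 - sFb S umax)
  set fa := sigmoid ∘ gate S.Wf S.Uf S.bf ua xa.2
  set fb := sigmoid ∘ gate S.Wf S.Uf S.bf ub xb.2
  set ia := sigmoid ∘ gate S.Wi S.Ui S.bi ua xa.2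
  set ib := sigmoid ∘ gate S.Wi S.Ui S.bi ub xb.2
  set ta := Real.tanh ∘ gate S.Wc S.Uc S.bc ua xa.2
  set tb := Real.tanh ∘ gate S.Wc S.Uc S.bc ub xb.2
  have hsplit : fa * xa.1 + ia * ta - (fb * xb.1 + ib * tb)
      = fa * (xa.1 - xb.1) + xb.1 * (fa - fb) + ia * (ta - tb) + tb * (ia - ib) := by ring
  have h1 : enorm (fa * (xa.1 - xb.1)) ≤ sFb S umax * enorm (xa.1 - xb.1) :=
    enorm_mul_le (sigmoid_pos _).le (abs_sigmoid_gate_le hua hha)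
  have h2 : enorm (xb.1 * (fa - fb))
      ≤ cBar * (1 / 4 * (spec S.Uf * enorm (xa.2 - xb.2) + spec S.Wf * enorm (ua - ub))) :=
    (enorm_mul_le (cBar_nonneg S umax) fun j => (abs_le_vinf _ j).trans hcb).trans
      (mul_le_mul_of_nonneg_left (enorm_sigmoid_gate_sub_le ua ub xa.2 xb.2) (cBar_nonneg S umax))
  have h3 : enorm (ia * (ta - tb))
      ≤ sIb S umax * (spec S.Uc * enorm (xa.2 - xb.2) + spec S.Wc * enorm (ua - ub)) :=
    (enorm_mul_le (sigmoid_pos _).le (abs_sigmoid_gate_le hua hha)).trans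
      (mul_le_mul_of_nonneg_left (enorm_tanh_gate_sub_le ua ub xa.2 xb.2) (sigmoid_pos _).le)
  have h4 : enorm (tb * (ia - ib))
      ≤ sCb S umax * (1 / 4 * (spec S.Ui * enorm (xa.2 - xb.2) + spec S.Wi * enorm (ua - ub))) :=
    (enorm_mul_le (sCb_nonneg S umax) (abs_tanh_gate_le hub hhb)).trans
      (mul_le_mul_of_nonneg_left (enorm_sigmoid_gate_sub_le ua ub xa.2 xb.2) (sCb_nonneg S umax))
  calc enorm (stepC S ua xa.1 xa.2 - stepC S ub xb.1 xb.2)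
      ≤ enorm (fa * (xa.1 - xb.1)) + enorm (xb.1 * (fa - fb)) + enorm (ia * (ta - tb))
        + enorm (tb * (ia - ib)) := by
        rw [stepC_eq, stepC_eq, hsplit]
        exact enorm_add_four_le _ _ _ _
    _ ≤ _ := by
        unfold alphaD betaD
        linarith

lemma enorm_stepH_sub_le (hxa : xa ∈ setX S umax) (hxb : xb ∈ setX S umax)
    (hua : ua ∈ setU m umax) (hub : ub ∈ setU m umax) :
    enorm (stepH S ua xa.1 xa.2 - stepH S ub xb.1 xb.2)
      ≤ sOb S umax * enorm (stepC S ua xa.1 xa.2 - stepC S ub xb.1 xb.2)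
        + 1 / 4 * sXb S umax * (spec S.Uo * enorm (xa.2 - xb.2) + spec S.Wo * enorm (ua - ub)) := by
  have hsXb : 0 ≤ sXb S umax := tanh_nonneg (cBar_nonneg S umax)
  set oa := sigmoid ∘ gate S.Wo S.Uo S.bo ua xa.2
  set ob := sigmoid ∘ gate S.Wo S.Uo S.bo ub xb.2
  set Ta := Real.tanh ∘ stepC S ua xa.1 xa.2
  set Tb := Real.tanh ∘ stepC S ub xb.1 xb.2
  have hsplit : oa * Ta - ob * Tb = oa * (Ta - Tb) + Tb * (oa - ob) := by ring
  have h1 : enorm (oa * (Ta - Tb))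
      ≤ sOb S umax * enorm (stepC S ua xa.1 xa.2 - stepC S ub xb.1 xb.2) :=
    (enorm_mul_le (sigmoid_pos _).le (abs_sigmoid_gate_le hua hxa.2)).trans
      (mul_le_mul_of_nonneg_left (enorm_tanh_sub_le _ _) (sigmoid_pos _).le)
  have h2 : enorm (Tb * (oa - ob))
      ≤ sXb S umax * (1 / 4 * (spec S.Uo * enorm (xa.2 - xb.2) + spec S.Wo * enorm (ua - ub))) :=
    (enorm_mul_le hsXb fun j =>
        abs_tanh_le_tanh ((abs_le_vinf _ j).trans (stepC_mem_setC hxb hub))).trans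
      (mul_le_mul_of_nonneg_left (enorm_sigmoid_gate_sub_le ua ub xa.2 xb.2) hsXb)
  calc enorm (stepH S ua xa.1 xa.2 - stepH S ub xb.1 xb.2)
      ≤ enorm (oa * (Ta - Tb)) + enorm (Tb * (oa - ob)) := by
        rw [stepH_eq, stepH_eq, hsplit]
        exact enorm_add_le _ _
    _ ≤ _ := by linarith

def incrementNorms (xa xb : State n) : Fin 2 → ℝ :=
  ![enorm (xa.1 - xb.1), enorm (xa.2 - xb.2)]

lemma incrementNorms_nonneg (xa xb : State n) : 0 ≤ incrementNorms xa xb := fun i => by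
  fin_cases i <;> exact enorm_nonneg _

lemma incrementNorms_step_le (hxa : xa ∈ setX S umax) (hxb : xb ∈ setX S umax)
    (hua : ua ∈ setU m umax) (hub : ub ∈ setU m umax) :
    incrementNorms (step S xa ua) (step S xb ub)
      ≤ Adelta S umax *ᵥ incrementNorms xa xb + enorm (ua - ub) • Bdelta S umax := by
  have hc := enorm_stepC_sub_le hxa hxb hua hub
  have hh := enorm_stepH_sub_le hxa hxb hua hub
  have hO : sOb S umax * enorm (stepC S ua xa.1 xa.2 - stepC S ub xb.1 xb.2)
      ≤ sOb S umax * (sFb S umax * enorm (xa.1 - xb.1) + alphaD S umax * enorm (xa.2 - xb.2)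
        + betaD S umax * enorm (ua - ub)) :=
    mul_le_mul_of_nonneg_left hc (sigmoid_pos _).le
  intro i
  fin_cases i <;> simp [incrementNorms, step, Adelta, Bdelta] <;> linarith

end Increments

lemma dotProduct_le_of_le_mulVec_add {ι : Type*} [Fintype ι] {A : Matrix ι ι ℝ}
    {v e e' B : ι → ℝ} {μ r : ℝ} (hv : 0 ≤ v) (he : 0 ≤ e) (hA : v ᵥ* A ≤ μ • v)
    (h : e' ≤ A *ᵥ e + r • B) : v ⬝ᵥ e' ≤ μ * (v ⬝ᵥ e) + r * (v ⬝ᵥ B) :=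
  calc v ⬝ᵥ e' ≤ v ⬝ᵥ (A *ᵥ e + r • B) := dotProduct_le_dotProduct_of_nonneg_left h hv
    _ = v ᵥ* A ⬝ᵥ e + r * (v ⬝ᵥ B) := by
        rw [dotProduct_add, dotProduct_mulVec, dotProduct_smul, smul_eq_mul]
    _ ≤ (μ • v) ⬝ᵥ e + r * (v ⬝ᵥ B) := by
        gcongr
        exact dotProduct_le_dotProduct_of_nonneg_right hA he
    _ = μ * (v ⬝ᵥ e) + r * (v ⬝ᵥ B) := by rw [smul_dotProduct, smul_eq_mul]

lemma le_pow_mul_add_div_of_le_mul_add {V : ℕ → ℝ} {μ c : ℝ} {k : ℕ} (hμ0 : 0 ≤ μ)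
    (hμ1 : μ < 1) (hc : 0 ≤ c) (h : ∀ j < k, V (j + 1) ≤ μ * V j + c) :
    V k ≤ μ ^ k * V 0 + c / (1 - μ) := by
  induction k with
  | zero => simpa using div_nonneg hc (sub_nonneg.2 hμ1.le)
  | succ k ih =>
    have hμ : 1 - μ ≠ 0 := by linarith
    calc V (k + 1) ≤ μ * V k + c := h k (by omega)
      _ ≤ μ * (μ ^ k * V 0 + c / (1 - μ)) + c := by
          gcongr
          exact ih fun j hj => h j (by omega)
      _ = μ ^ (k + 1) * V 0 + c / (1 - μ) := by field_simp; ring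

lemma nnnorm_le_specRad_of_det_eq_zero {k : ℕ} {A : Matrix (Fin k) (Fin k) ℝ} {lam : ℝ}
    (h : (Matrix.scalar (Fin k) lam - A).det = 0) : (‖(lam : ℂ)‖₊ : ℝ≥0∞) ≤ specRad A := by
  refine le_iSup₂ (f := fun (z : ℂ) (_ : z ∈ spectrum ℂ (A.map ((↑) : ℝ → ℂ))) =>
    (‖z‖₊ : ℝ≥0∞)) (lam : ℂ) ?_
  have hmap : algebraMap ℂ _ (lam : ℂ) - A.map ((↑) : ℝ → ℂ)
      = Complex.ofRealHom.mapMatrix (Matrix.scalar (Fin k) lam - A) := by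
    ext i j
    by_cases hij : i = j <;> simp [Matrix.algebraMap_matrix_apply, hij]
  rw [spectrum.mem_iff, Matrix.isUnit_iff_isUnit_det, hmap, ← RingHom.map_det, h, map_zero]
  exact not_isUnit_zero

lemma exists_left_weights_of_specRad_lt_one {a b c d : ℝ} (ha : 0 ≤ a) (hb : 0 ≤ b)
    (hc : 0 ≤ c) (hd : 0 ≤ d) (h : specRad !![a, b; c, d] < 1) :
    ∃ μ : ℝ, 0 < μ ∧ μ < 1 ∧ ∃ v : Fin 2 → ℝ, (∀ i, 0 < v i) ∧ v ᵥ* !![a, b; c, d] ≤ μ • v := by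
  obtain ⟨s, hs0, hs2⟩ : ∃ s, 0 ≤ s ∧ s ^ 2 = (a - d) ^ 2 + 4 * (b * c) :=
    ⟨_, Real.sqrt_nonneg _, Real.sq_sqrt (by positivity)⟩
  have hs : |a - d| ≤ s := abs_le_of_sq_le_sq (by nlinarith) hs0
  -- `(a + d + s) / 2` is a real eigenvalue, so it is bounded by the spectral radius.
  have hdet : (Matrix.scalar (Fin 2) ((a + d + s) / 2) - !![a, b; c, d]).det = 0 := by
    simp [Matrix.det_fin_two]
    linear_combination (1 / 4 : ℝ) * hs2
  have hlam1 : (a + d + s) / 2 < 1 := by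
    have hlt := (nnnorm_le_specRad_of_det_eq_zero hdet).trans_lt h
    rw [← ENNReal.coe_one, ENNReal.coe_lt_coe, ← NNReal.coe_lt_coe, coe_nnnorm,
      Complex.norm_real, Real.norm_eq_abs, NNReal.coe_one] at hlt
    exact (le_abs_self _).trans_lt hlt
  obtain ⟨μ, hμ⟩ : ∃ μ, μ = (1 + (a + d + s) / 2) / 2 := ⟨_, rfl⟩
  have hq : 0 ≤ μ ^ 2 - (a + d) * μ + a * d - b * c := by
    have : μ ^ 2 - (a + d) * μ + a * d - b * c
        = (μ - (a + d + s) / 2) * (μ - (a + d - s) / 2) := by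
      linear_combination (1 / 4 : ℝ) * hs2
    rw [this]
    exact mul_nonneg (by linarith) (by linarith)
  -- With this `v`, both coordinates of `μ • v - v ᵥ* A` equal `χ(μ)`, where `χ` is the
  -- characteristic polynomial; `hq` says `χ(μ) ≥ 0`.
  refine ⟨μ, by linarith, by linarith, ![μ - d + c, b + μ - a], ?_, ?_⟩
  · intro i
    fin_cases i <;> simp <;> linarith [le_abs_self (a - d), neg_abs_le (a - d)]
  · intro i
    fin_cases i <;> simp [Matrix.vecMul, dotProduct, Fin.sum_univ_two] <;> nlinarith

lemma le_iSup_mem_range {f : ℕ → ℝ} (hf : 0 ≤ f) {k j : ℕ} (hj : j < k) :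
    f j ≤ ⨆ i ∈ Finset.range k, f i := by
  have hbdd : BddAbove (range fun i => ⨆ _ : i ∈ Finset.range k, f i) := by
    refine ⟨∑ i ∈ Finset.range k, f i, ?_⟩
    rintro _ ⟨i, rfl⟩
    exact Real.iSup_le (fun hi => Finset.single_le_sum (fun i _ => hf i) hi)
      (Finset.sum_nonneg fun i _ => hf i)
  calc f j = ⨆ _ : j ∈ Finset.range k, f j :=
        (ciSup_pos (f := fun _ => f j) (Finset.mem_range.2 hj)).symm
    _ ≤ _ := le_ciSup hbdd j

lemma iSup_mem_range_nonneg {f : ℕ → ℝ} (hf : 0 ≤ f) (k : ℕ) :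
    0 ≤ ⨆ i ∈ Finset.range k, f i :=
  Real.iSup_nonneg fun i => Real.iSup_nonneg fun _ => hf i

lemma isClassKL_mul_pow_mul {C μ : ℝ} (hC : 0 < C) (hμ0 : 0 < μ) (hμ1 : μ < 1) :
    IsClassKL fun s k => C * μ ^ k * s := by
  refine ⟨fun k => ⟨by fun_prop, fun x _ y _ hxy => ?_, by simp⟩,
    fun s hs => ⟨fun k l hkl => ?_, ?_⟩, fun s hs k => by positivity⟩
  · exact mul_lt_mul_of_pos_left hxy (by positivity)
  · exact mul_lt_mul_of_pos_right
      (mul_lt_mul_of_pos_left (pow_lt_pow_right_of_lt_one₀ hμ0 hμ1 hkl) hC) hs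
  · simpa using ((tendsto_pow_atTop_nhds_zero_of_lt_one hμ0.le hμ1).const_mul C).mul_const s

lemma isClassKInf_mul {C : ℝ} (hC : 0 < C) : IsClassKInf fun s => C * s :=
  ⟨by fun_prop, by simp, fun x _ y _ hxy => mul_lt_mul_of_pos_left hxy hC,
    fun s hs => by positivity, tendsto_id.const_mul_atTop hC⟩

section Stability

variable {n m p : ℕ} {S : LSTM n m p} {umax : ℝ}

lemma alphaD_nonneg (S : LSTM n m p) (umax : ℝ) : 0 ≤ alphaD S umax := by
  have : 0 ≤ sIb S umax := (sigmoid_pos _).le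
  have := cBar_nonneg S umax
  have := sCb_nonneg S umax
  have := spec_nonneg S.Uf
  have := spec_nonneg S.Ui
  have := spec_nonneg S.Uc
  unfold alphaD
  positivity

lemma betaD_nonneg (S : LSTM n m p) (umax : ℝ) : 0 ≤ betaD S umax := by
  have : 0 ≤ sIb S umax := (sigmoid_pos _).le
  have := cBar_nonneg S umax
  have := sCb_nonneg S umax
  have := spec_nonneg S.Wf
  have := spec_nonneg S.Wi
  have := spec_nonneg S.Wc
  unfold betaD
  positivity

lemma Bdelta_nonneg (S : LSTM n m p) (umax : ℝ) : 0 ≤ Bdelta S umax := by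
  have : 0 ≤ sOb S umax := (sigmoid_pos _).le
  have : 0 ≤ sXb S umax := tanh_nonneg (cBar_nonneg S umax)
  have := betaD_nonneg S umax
  have := spec_nonneg S.Wo
  intro i
  fin_cases i <;> simp [Bdelta] <;> positivity

lemma exists_left_weights_Adelta (hrho : specRad (Adelta S umax) < 1) :
    ∃ μ : ℝ, 0 < μ ∧ μ < 1 ∧ ∃ v : Fin 2 → ℝ, (∀ i, 0 < v i) ∧ v ᵥ* Adelta S umax ≤ μ • v := by
  have hF : 0 ≤ sFb S umax := (sigmoid_pos _).le
  have hO : 0 ≤ sOb S umax := (sigmoid_pos _).le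
  have : 0 ≤ sXb S umax := tanh_nonneg (cBar_nonneg S umax)
  have hα := alphaD_nonneg S umax
  have := spec_nonneg S.Uo
  exact exists_left_weights_of_specRad_lt_one hF hα (mul_nonneg hO hF) (by positivity) hrho

lemma xnorm_le_enorm_add_enorm (x : State n) : xnorm x ≤ enorm x.1 + enorm x.2 := by
  rw [xnorm, Real.sqrt_le_left (add_nonneg (enorm_nonneg _) (enorm_nonneg _)), add_sq,
    enorm, enorm, Real.sq_sqrt (by positivity), Real.sq_sqrt (by positivity)]
  have := mul_nonneg (Real.sqrt_nonneg (∑ i, x.1 i ^ 2)) (Real.sqrt_nonneg (∑ i, x.2 i ^ 2))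
  linarith

lemma enorm_fst_le_xnorm (x : State n) : enorm x.1 ≤ xnorm x :=
  Real.sqrt_le_sqrt (le_add_of_nonneg_right (by positivity))

lemma enorm_snd_le_xnorm (x : State n) : enorm x.2 ≤ xnorm x :=
  Real.sqrt_le_sqrt (le_add_of_nonneg_left (by positivity))

lemma dotProduct_incrementNorms (v : Fin 2 → ℝ) (xa xb : State n) :
    v ⬝ᵥ incrementNorms xa xb = v 0 * enorm (xa.1 - xb.1) + v 1 * enorm (xa.2 - xb.2) := by
  simp [incrementNorms, dotProduct, Fin.sum_univ_two]

lemma min_mul_xnorm_sub_le {v : Fin 2 → ℝ} (hv : 0 ≤ v) (xa xb : State n) :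
    min (v 0) (v 1) * xnorm (xa - xb) ≤ v ⬝ᵥ incrementNorms xa xb := by
  rw [dotProduct_incrementNorms]
  calc min (v 0) (v 1) * xnorm (xa - xb)
      ≤ min (v 0) (v 1) * (enorm (xa.1 - xb.1) + enorm (xa.2 - xb.2)) :=
        mul_le_mul_of_nonneg_left (xnorm_le_enorm_add_enorm _) (le_min (hv 0) (hv 1))
    _ ≤ _ := by
        nlinarith [min_le_left (v 0) (v 1), min_le_right (v 0) (v 1),
          enorm_nonneg (xa.1 - xb.1), enorm_nonneg (xa.2 - xb.2)]

lemma dotProduct_incrementNorms_le {v : Fin 2 → ℝ} (hv : 0 ≤ v) (xa xb : State n) :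
    v ⬝ᵥ incrementNorms xa xb ≤ (v 0 + v 1) * xnorm (xa - xb) := by
  rw [dotProduct_incrementNorms, add_mul]
  exact add_le_add (mul_le_mul_of_nonneg_left (enorm_fst_le_xnorm (xa - xb)) (hv 0))
    (mul_le_mul_of_nonneg_left (enorm_snd_le_xnorm (xa - xb)) (hv 1))

lemma exists_traj_sub_le (hrho : specRad (Adelta S umax) < 1) :
    ∃ μ C₁ C₂ : ℝ, 0 < μ ∧ μ < 1 ∧ 0 < C₁ ∧ 0 < C₂ ∧
      ∀ (k : ℕ) (xa0 xb0 : State n) (ua ub : ℕ → Fin m → ℝ) (D : ℝ),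
        xa0 ∈ setX S umax → xb0 ∈ setX S umax →
        (∀ j < k, ua j ∈ setU m umax) → (∀ j < k, ub j ∈ setU m umax) →
        (∀ j < k, enorm (ua j - ub j) ≤ D) → 0 ≤ D →
        xnorm (traj S xa0 ua k - traj S xb0 ub k)
          ≤ C₁ * μ ^ k * xnorm (xa0 - xb0) + C₂ * D := by
  obtain ⟨μ, hμ0, hμ1, v, hv, hA⟩ := exists_left_weights_Adelta hrho
  have hv0 : 0 ≤ v := fun i => (hv i).le
  have hw : 0 < min (v 0) (v 1) := lt_min (hv 0) (hv 1)
  have hK : 0 ≤ v ⬝ᵥ Bdelta S umax := dotProduct_nonneg_of_nonneg hv0 (Bdelta_nonneg S umax)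
  -- the `+ 1` keeps `γ` strictly increasing even when `B_δ = 0`
  refine ⟨μ, (v 0 + v 1) / min (v 0) (v 1),
    (v ⬝ᵥ Bdelta S umax) / ((1 - μ) * min (v 0) (v 1)) + 1, hμ0, hμ1,
    div_pos (add_pos (hv 0) (hv 1)) hw, by positivity, ?_⟩
  intro k xa0 xb0 ua ub D hxa0 hxb0 hua hub hD hD0
  have hV : v ⬝ᵥ incrementNorms (traj S xa0 ua k) (traj S xb0 ub k)
      ≤ μ ^ k * (v ⬝ᵥ incrementNorms xa0 xb0) + D * (v ⬝ᵥ Bdelta S umax) / (1 - μ) := by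
    refine le_pow_mul_add_div_of_le_mul_add
      (V := fun j => v ⬝ᵥ incrementNorms (traj S xa0 ua j) (traj S xb0 ub j)) hμ0.le hμ1
      (mul_nonneg hD0 hK) fun j hj => ?_
    refine (dotProduct_le_of_le_mulVec_add hv0 (incrementNorms_nonneg _ _) hA
      (incrementNorms_step_le (traj_mem_setX hxa0 hua j hj.le)
        (traj_mem_setX hxb0 hub j hj.le) (hua j hj) (hub j hj))).trans ?_
    gcongr
    exact hD j hj
  have hlow := min_mul_xnorm_sub_le hv0 (traj S xa0 ua k) (traj S xb0 ub k)
  have hup := mul_le_mul_of_nonneg_left (dotProduct_incrementNorms_le hv0 xa0 xb0)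
    (pow_nonneg hμ0.le k)
  have h1μ : 0 < 1 - μ := sub_pos.2 hμ1
  rw [← mul_le_mul_iff_of_pos_left hw]
  calc min (v 0) (v 1) * xnorm (traj S xa0 ua k - traj S xb0 ub k)
      ≤ μ ^ k * ((v 0 + v 1) * xnorm (xa0 - xb0)) + D * (v ⬝ᵥ Bdelta S umax) / (1 - μ) := by
        linarith
    _ ≤ _ := by
        field_simp
        nlinarith [mul_pos hw hw, mul_nonneg hD0 (mul_nonneg hw.le h1μ.le)]

end Stability

theorem statement2_general {n m p : ℕ} (S : LSTM n m p) (umax : ℝ)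
    (hrho : specRad (Adelta S umax) < 1) : deltaISS S umax := by
  obtain ⟨μ, C₁, C₂, hμ0, hμ1, hC₁, hC₂, hbound⟩ := exists_traj_sub_le hrho
  refine ⟨fun s k => C₁ * μ ^ k * s, fun s => C₂ * s, isClassKL_mul_pow_mul hC₁ hμ0 hμ1,
    isClassKInf_mul hC₂, fun k xa0 xb0 hxa0 hxb0 ua ub hua hub => ?_⟩
  have hf : 0 ≤ fun j => enorm (ua j - ub j) := fun _ => enorm_nonneg _
  exact hbound k xa0 xb0 ua ub _ hxa0 hxb0 hua hub (fun j hj => le_iSup_mem_range hf hj)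
    (iSup_mem_range_nonneg hf k)

/-- `ρ(A_δ) < 1` implies δISS of the LSTM in `X` and `U`. -/
theorem statement2 {n m p : ℕ} (S : LSTM n m p) (umax : ℝ) (hu : 0 < umax)
    (hrho : specRad (Adelta S umax) < 1) : deltaISS S umax :=
  statement2_general S umax hrho

end LSTMmpc
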